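/- Let α > 2, H, P > 0, ω > 0, M > 0. Define s(λ) := (λ²/2)H + (ω/2)M − (λ^α/(σ+2))P and G(λ) := λ²H − (α/(σ+2))λ^α P, so G(λ) = λ s'(λ). Suppose G(1) < 0. Then there exists λ₀ ∈ (0,1) with G(λ₀) = 0, and for any such λ₀, G(1) ≤ 2(s(1) − s(λ₀)). -/

import Mathlib

/-!
Write `c = α P / (σ + 2)`. Since `G(λ) = λ² (H − c λ^(α−2))` and `G(1) = H − c < 0 < H`, the root
is explicit: `λ₀ = (H / c)^(1/(α−2)) ∈ (0, 1)`. For the gap, substituting `λ₀² H = c λ₀^α` into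
`2 (s(1) − s(λ₀)) − G(1)` leaves `(α − 2) (P / (σ + 2)) (1 − λ₀^α)`, which is nonnegative
since `c > H > 0` and `λ₀ ≤ 1`.
-/

open Set

namespace Virial

variable (H P σ α ω M : ℝ)

/-- The paper's `s(λ)`. -/
noncomputable def action (lam : ℝ) : ℝ := lam ^ 2 / 2 * H + ω / 2 * M - lam ^ α / (σ + 2) * P

/-- The paper's `G(λ) = λ s'(λ)`. -/
noncomputable def virial (lam : ℝ) : ℝ := lam ^ 2 * H - α / (σ + 2) * lam ^ α * P

variable {H P σ α ω M}

theorem virial_one : virial H P σ α 1 = H - α / (σ + 2) * P := by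
  simp [virial]

theorem virial_eq_mul_sub {lam : ℝ} (hlam : 0 < lam) :
    virial H P σ α lam = lam ^ 2 * (H - α / (σ + 2) * P * lam ^ (α - 2)) := by
  have hsplit : lam ^ α = lam ^ 2 * lam ^ (α - 2) := by
    rw [← Real.rpow_natCast, ← Real.rpow_add hlam]
    norm_num
  rw [virial, hsplit]
  ring

theorem exists_virial_eq_zero (hα : 2 < α) (hH : 0 < H) (hHc : H < α / (σ + 2) * P) :
    ∃ lam ∈ Ioo (0 : ℝ) 1, virial H P σ α lam = 0 := by
  set c := α / (σ + 2) * P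
  have hc : 0 < c := hH.trans hHc
  have hHc_pos : 0 < H / c := div_pos hH hc
  have hexp : 0 < (α - 2)⁻¹ := inv_pos.2 (by linarith)
  refine ⟨(H / c) ^ (α - 2)⁻¹,
    ⟨Real.rpow_pos_of_pos hHc_pos _, Real.rpow_lt_one hHc_pos.le ((div_lt_one hc).2 hHc) hexp⟩, ?_⟩
  rw [virial_eq_mul_sub (Real.rpow_pos_of_pos hHc_pos _),
    Real.rpow_inv_rpow hHc_pos.le (by linarith), mul_div_cancel₀ H hc.ne']
  ring

theorem virial_one_le_two_mul_action_sub (hα : 2 ≤ α) (hP : 0 ≤ P / (σ + 2)) {lam : ℝ}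
    (hlam₀ : 0 ≤ lam) (hlam₁ : lam ≤ 1) (hG : virial H P σ α lam = 0) :
    virial H P σ α 1 ≤ 2 * (action H P σ α ω M 1 - action H P σ α ω M lam) := by
  have hpow : lam ^ α ≤ 1 := Real.rpow_le_one hlam₀ hlam₁ (by linarith)
  have hgap : 0 ≤ (α - 2) * (P / (σ + 2)) * (1 - lam ^ α) :=
    mul_nonneg (mul_nonneg (by linarith) hP) (by linarith)
  simp only [virial, action, Real.one_rpow, one_pow] at hG ⊢
  linear_combination hgap + hG

end Virial

theorem virial_action_gap_general (σ α H P ω M : ℝ)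
    (hα : 2 < α) (hH : 0 < H)
    (hG1 : (1 : ℝ) ^ 2 * H - α / (σ + 2) * (1 : ℝ) ^ α * P < 0) :
    (∃ lam₀ ∈ Set.Ioo (0 : ℝ) 1,
        lam₀ ^ 2 * H - α / (σ + 2) * lam₀ ^ α * P = 0) ∧
      ∀ lam₀ ∈ Set.Ioo (0 : ℝ) 1,
        lam₀ ^ 2 * H - α / (σ + 2) * lam₀ ^ α * P = 0 →
          (1 : ℝ) ^ 2 * H - α / (σ + 2) * (1 : ℝ) ^ α * P ≤
            2 * (((1 : ℝ) ^ 2 / 2 * H + ω / 2 * M - (1 : ℝ) ^ α / (σ + 2) * P) -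
              (lam₀ ^ 2 / 2 * H + ω / 2 * M - lam₀ ^ α / (σ + 2) * P)) := by
  have hHc : H < α / (σ + 2) * P := by
    have : Virial.virial H P σ α 1 < 0 := hG1
    rw [Virial.virial_one] at this
    linarith
  have hP : 0 < P / (σ + 2) := by
    refine pos_of_mul_pos_right (a := α) ?_ (by linarith)
    rw [← mul_div_assoc, ← div_mul_eq_mul_div]
    linarith
  exact ⟨Virial.exists_virial_eq_zero hα hH hHc, fun lam hlam hG =>
    Virial.virial_one_le_two_mul_action_sub (ω := ω) (M := M) hα.le hP.le hlam.1.le hlam.2.le hG⟩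

/-- with s(λ) = (λ²/2)H + (ω/2)M − (λ^α/(σ+2))P and
G(λ) = λ²H − (α/(σ+2))λ^α P (so G(λ) = λs'(λ)), if G(1) < 0 then there is
λ₀ ∈ (0,1) with G(λ₀) = 0, and for any such λ₀, G(1) ≤ 2(s(1) − s(λ₀)). -/
theorem virial_action_gap (σ α H P ω M : ℝ)
    (hσ : 0 < σ) (hα : 2 < α) (hH : 0 < H) (hP : 0 < P)
    (hω : 0 < ω) (hM : 0 < M)
    (hG1 : (1 : ℝ) ^ 2 * H - α / (σ + 2) * (1 : ℝ) ^ α * P < 0) :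
    (∃ lam₀ ∈ Set.Ioo (0 : ℝ) 1,
        lam₀ ^ 2 * H - α / (σ + 2) * lam₀ ^ α * P = 0) ∧
      ∀ lam₀ ∈ Set.Ioo (0 : ℝ) 1,
        lam₀ ^ 2 * H - α / (σ + 2) * lam₀ ^ α * P = 0 →
          (1 : ℝ) ^ 2 * H - α / (σ + 2) * (1 : ℝ) ^ α * P ≤
            2 * (((1 : ℝ) ^ 2 / 2 * H + ω / 2 * M - (1 : ℝ) ^ α / (σ + 2) * P) -
              (lam₀ ^ 2 / 2 * H + ω / 2 * M - lam₀ ^ α / (σ + 2) * P)) :=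
  virial_action_gap_general σ α H P ω M hα hH hG1
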